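/- For every integer N ≥ 2 and reals g, h > 0 with max{g, N·h} < 1 and g ≥ N²·h, setting δ = N²·h one has δ ≤ 1 and (1/2)·δ·log(1 + (N²gh/δ²)/(1 + g/δ + N·h/δ)) ≥ (1/2)·ln(4/3)·log(1 + N²·h). -/

import Mathlib

/-!
With `δ = N²h` the signal-to-noise ratio inside the logarithm simplifies to `x / (1 + x + 1/N)`
with `x = g/δ ≥ 1`, which is at least `1/3`. So the rate is at least `(δ/2) · log₂(4/3)`, and
`log₂(1 + δ) ≤ δ / ln 2` turns this into the claimed bound.
-/

open Real

lemma one_third_le_div_one_add_add {x c : ℝ} (hx : 1 ≤ x) (hc₀ : 0 ≤ c) (hc₁ : c ≤ 1) :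
    1 / 3 ≤ x / (1 + x + c) := by
  rw [div_le_div_iff₀ (by norm_num) (by positivity)]
  linarith

lemma log_mul_logb_one_add_le {a b t : ℝ} (ha : 1 ≤ a) (hb : 1 < b) (ht : -1 < t) :
    log a * logb b (1 + t) ≤ t * logb b a := by
  have hlog_le : log (1 + t) ≤ t := by
    linarith [log_le_sub_one_of_pos (show 0 < 1 + t by linarith)]
  have hlogb : logb b (1 + t) ≤ t / log b :=
    div_le_div_of_nonneg_right hlog_le (log_pos hb).le
  calc log a * logb b (1 + t) ≤ log a * (t / log b) :=
        mul_le_mul_of_nonneg_left hlogb (log_nonneg ha)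
    _ = t * logb b a := by rw [logb]; ring

theorem bursty_af_rate_strong_broadcast_general (N : ℕ) (hN : 2 ≤ N) (g h : ℝ)
    (hh : 0 < h) (hmax : max g ((N : ℝ) * h) < 1)
    (hgh : (N : ℝ) ^ 2 * h ≤ g) :
    (N : ℝ) ^ 2 * h ≤ 1 ∧
    (1 / 2) * Real.log (4 / 3) * Real.logb 2 (1 + (N : ℝ) ^ 2 * h) ≤
      (1 / 2) * ((N : ℝ) ^ 2 * h) *
        Real.logb 2 (1 + ((N : ℝ) ^ 2 * g * h / ((N : ℝ) ^ 2 * h) ^ 2) /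
          (1 + g / ((N : ℝ) ^ 2 * h) + (N : ℝ) * h / ((N : ℝ) ^ 2 * h))) := by
  have hN₁ : (1 : ℝ) ≤ N := by exact_mod_cast (by omega : 1 ≤ N)
  set δ := (N : ℝ) ^ 2 * h with hδ_def
  have hδ : 0 < δ := by positivity
  refine ⟨hgh.trans (le_max_left g _ |>.trans hmax.le), ?_⟩
  have hgain : (N : ℝ) ^ 2 * g * h / δ ^ 2 = g / δ := by rw [hδ_def]; field_simp
  have hnoise : (N : ℝ) * h / δ = 1 / N := by rw [hδ_def]; field_simp
  have hx : 1 ≤ g / δ := (one_le_div hδ).mpr hgh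
  have hsnr : 1 / 3 ≤ g / δ / (1 + g / δ + 1 / N) :=
    one_third_le_div_one_add_add hx (by positivity) (div_le_one_of_le₀ hN₁ (by positivity))
  rw [hgain, hnoise]
  calc 1 / 2 * log (4 / 3) * logb 2 (1 + δ) ≤ 1 / 2 * δ * logb 2 (4 / 3) := by
        rw [mul_assoc, mul_assoc]
        exact mul_le_mul_of_nonneg_left
          (log_mul_logb_one_add_le (by norm_num) one_lt_two (by linarith)) (by norm_num)
    _ ≤ 1 / 2 * δ * logb 2 (1 + g / δ / (1 + g / δ + 1 / N)) := by
        gcongr 1 / 2 * δ * logb 2 ?_ <;> linarith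

theorem bursty_af_rate_strong_broadcast (N : ℕ) (hN : 2 ≤ N) (g h : ℝ)
    (hg : 0 < g) (hh : 0 < h) (hmax : max g ((N : ℝ) * h) < 1)
    (hgh : (N : ℝ) ^ 2 * h ≤ g) :
    (N : ℝ) ^ 2 * h ≤ 1 ∧
    (1 / 2) * Real.log (4 / 3) * Real.logb 2 (1 + (N : ℝ) ^ 2 * h) ≤
      (1 / 2) * ((N : ℝ) ^ 2 * h) *
        Real.logb 2 (1 + ((N : ℝ) ^ 2 * g * h / ((N : ℝ) ^ 2 * h) ^ 2) /
          (1 + g / ((N : ℝ) ^ 2 * h) + (N : ℝ) * h / ((N : ℝ) ^ 2 * h))) :=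
  bursty_af_rate_strong_broadcast_general N hN g h hh hmax hgh
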